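/- arXiv:2510.01277 — 7 statements merged into one kernel-verified Lean document; each statement's English description precedes it below -/
import Mathlib

section
/- For every positive integer n, ∑_{k=1}^{n} δ_s(k)·ω(n−k) = ∑_{m=1}^{n} λ(m) · ( ∑_{j=0}^{⌊(n−m)/m⌋} ω((n−m) − j·m) ), where λ is Liouville's function. -/
/-!
The divisor sum `∑_{d ∣ k} λ(d)` is the indicator of the squares: `ζ * λ` is multiplicative and
on a prime power `p^a` it is `1 - 1 + ⋯ ± 1`, which is `1` exactly when `a` is even. The left side
is therefore `∑_{k ≤ n} ∑_{d ∣ k} λ(d) ω(n - k)`, and grouping these terms by `d`, with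
`k = d (j + 1)`, gives the right side.
-/

open scoped Classical

/-- The pentagonal-number coefficient function `ω`: `ω 0 = 1`,
`ω m = (-1)^k` if `m = (3k² + k)/2` or `m = (3k² - k)/2` for a positive integer `k`,
and `ω m = 0` otherwise (in particular for negative `m`). -/
noncomputable def pentaCoeff (m : ℤ) : ℤ :=
  if m = 0 then 1
  else if h : ∃ k : ℕ, 0 < k ∧ (2 * m = 3 * (k : ℤ) ^ 2 + k ∨ 2 * m = 3 * (k : ℤ) ^ 2 - k)
  then (-1) ^ h.choose
  else 0

/-- The inner sum `∑_{j=0}^{⌊(n-m)/m⌋} ω((n-m) - j·m)`. -/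
noncomputable def pentaSum (n m : ℕ) : ℤ :=
  ∑ j ∈ Finset.range ((n - m) / m + 1), pentaCoeff (((n : ℤ) - m) - j * m)

/-- Liouville's function `λ(n) = (-1)^Ω(n)` where `Ω(n)` is the number of prime factors of `n`
counted with multiplicity; in particular `λ(1) = 1`. -/
def liouville (m : ℕ) : ℤ := (-1) ^ m.primeFactorsList.length

open Finset

theorem Nat.Coprime.isSquare_mul_iff {m n : ℕ} (h : m.Coprime n) :
    IsSquare (m * n) ↔ IsSquare m ∧ IsSquare n := by
  refine ⟨fun ⟨c, hc⟩ => ?_, fun ⟨hm, hn⟩ => hm.mul hn⟩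
  have hsq : m * n = c ^ 2 := hc.trans (sq c).symm
  obtain ⟨a, rfl⟩ := exists_eq_pow_of_mul_eq_pow (Nat.isUnit_iff.2 h) hsq
  obtain ⟨b, rfl⟩ := exists_eq_pow_of_mul_eq_pow (Nat.isUnit_iff.2 h.symm)
    ((mul_comm _ _).trans hsq)
  exact ⟨⟨a, sq a⟩, ⟨b, sq b⟩⟩

theorem Nat.Prime.isSquare_pow_iff {p k : ℕ} (hp : p.Prime) : IsSquare (p ^ k) ↔ Even k := by
  refine ⟨fun ⟨r, hr⟩ => ⟨r.factorization p, ?_⟩, fun hk => hk.isSquare_pow p⟩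
  simpa [hp.factorization_pow, Nat.factorization_pow, ← two_mul] using
    congrArg (fun x => x.factorization p) (hr.trans (sq r).symm)

namespace ArithmeticFunction

open scoped ArithmeticFunction.zeta

noncomputable def squareIndicator : ArithmeticFunction ℤ :=
  ⟨fun n => if n ≠ 0 ∧ IsSquare n then 1 else 0, by simp⟩

theorem squareIndicator_apply {n : ℕ} (hn : n ≠ 0) :
    squareIndicator n = if IsSquare n then 1 else 0 := by
  simp [squareIndicator, hn]

theorem isMultiplicative_squareIndicator : squareIndicator.IsMultiplicative := by
  refine IsMultiplicative.iff_ne_zero.2 ⟨by simp [squareIndicator_apply], fun hm hn hmn => ?_⟩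
  simp only [squareIndicator_apply (mul_ne_zero hm hn), squareIndicator_apply hm,
    squareIndicator_apply hn, hmn.isSquare_mul_iff]
  split_ifs <;> simp_all

theorem coe_zeta_mul_liouville : (ζ : ArithmeticFunction ℤ) * liouville = squareIndicator := by
  refine (IsMultiplicative.eq_iff_eq_on_prime_powers _
    (isMultiplicative_zeta.natCast.mul isMultiplicative_liouville) _
    isMultiplicative_squareIndicator).2 fun p k hp => ?_
  have hpow : ∀ i, liouville (p ^ i) = (-1) ^ i := fun i => by
    rw [liouville_apply (pow_ne_zero _ hp.ne_zero), cardFactors_apply_prime_pow hp]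
  rw [coe_zeta_mul_apply, Nat.sum_divisors_prime_pow hp, squareIndicator_apply
    (pow_ne_zero _ hp.ne_zero)]
  simp only [hpow, neg_one_geom_sum, Nat.even_add_one, hp.isSquare_pow_iff]
  split_ifs <;> simp_all

theorem sum_divisors_liouville {n : ℕ} (hn : n ≠ 0) :
    ∑ d ∈ n.divisors, liouville d = if IsSquare n then 1 else 0 := by
  rw [← coe_zeta_mul_apply, coe_zeta_mul_liouville, squareIndicator_apply hn]

end ArithmeticFunction

theorem liouville_eq_arithmeticFunction_liouville {n : ℕ} (hn : n ≠ 0) :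
    liouville n = ArithmeticFunction.liouville n := by
  rw [ArithmeticFunction.liouville_apply hn, ArithmeticFunction.cardFactors_apply, liouville]

theorem Nat.sum_Icc_sum_divisors_eq_sum_Icc_sum_range {M : Type*} [AddCommMonoid M]
    (F : ℕ → ℕ → M) (n : ℕ) :
    ∑ k ∈ Icc 1 n, ∑ d ∈ k.divisors, F d k =
      ∑ d ∈ Icc 1 n, ∑ j ∈ range (n / d), F d (d * (j + 1)) := by
  rw [sum_comm' (t' := Icc 1 n) (s' := fun d => (range (n / d)).image fun j => d * (j + 1))]
  · refine sum_congr rfl fun d hd => sum_image fun i _ j _ hij => ?_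
    have : 0 < d := (mem_Icc.1 hd).1
    simpa using Nat.eq_of_mul_eq_mul_left this hij
  · intro k d
    simp only [mem_Icc, mem_divisors, mem_image, mem_range]
    constructor
    · rintro ⟨⟨hk1, hkn⟩, ⟨q, rfl⟩, -⟩
      have hd : 0 < d := Nat.pos_of_mul_pos_right hk1
      have hq : 0 < q := Nat.pos_of_mul_pos_left hk1
      have hqn : q ≤ n / d := (Nat.le_div_iff_mul_le hd).2 (by linarith [mul_comm d q])
      exact ⟨⟨q - 1, by omega, by rw [Nat.sub_add_cancel hq]⟩, hd, by nlinarith⟩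
    · rintro ⟨⟨j, hj, rfl⟩, hd, -⟩
      have hjn : (j + 1) * d ≤ n := (Nat.le_div_iff_mul_le hd).1 hj
      refine ⟨⟨by nlinarith, by linarith [mul_comm d (j + 1)]⟩, dvd_mul_right _ _, by positivity⟩

theorem pentaSum_eq_sum_range {n m : ℕ} (hm : 0 < m) (hmn : m ≤ n) :
    pentaSum n m = ∑ j ∈ range (n / m), pentaCoeff (n - ↑(m * (j + 1))) := by
  rw [pentaSum, ← Nat.div_eq_sub_div hm hmn]
  refine sum_congr rfl fun j _ => congrArg pentaCoeff ?_
  push_cast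
  ring

theorem euler_type_liouville_general (n : ℕ) :
    ∑ k ∈ Finset.Icc 1 n, (if IsSquare k then (1 : ℤ) else 0) * pentaCoeff ((n : ℤ) - k) =
      ∑ m ∈ Finset.Icc 1 n, liouville m * pentaSum n m := by
  calc
    _ = ∑ k ∈ Icc 1 n, ∑ d ∈ k.divisors, liouville d * pentaCoeff (n - k) := by
      refine sum_congr rfl fun k hk => ?_
      rw [← sum_mul, ← ArithmeticFunction.sum_divisors_liouville
        (Nat.one_le_iff_ne_zero.1 (mem_Icc.1 hk).1)]
      congr 1
      exact sum_congr rfl fun d hd =>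
        (liouville_eq_arithmeticFunction_liouville (Nat.pos_of_mem_divisors hd).ne').symm
    _ = ∑ m ∈ Icc 1 n, ∑ j ∈ range (n / m), liouville m * pentaCoeff (n - ↑(m * (j + 1))) :=
      Nat.sum_Icc_sum_divisors_eq_sum_Icc_sum_range _ n
    _ = _ := sum_congr rfl fun m hm => by
      rw [pentaSum_eq_sum_range (mem_Icc.1 hm).1 (mem_Icc.1 hm).2, mul_sum]

theorem euler_type_liouville (n : ℕ) (hn : 0 < n) :
    ∑ k ∈ Finset.Icc 1 n, (if IsSquare k then (1 : ℤ) else 0) * pentaCoeff ((n : ℤ) - k) =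
      ∑ m ∈ Finset.Icc 1 n, liouville m * pentaSum n m :=
  euler_type_liouville_general n
end

section
/- For every integer n > 1, ω(n−1) = ∑_{m=1}^{n} μ(m) · ( ∑_{j=0}^{⌊(n−m)/m⌋} ω((n−m) − j·m) ), where μ is the Möbius function. -/
open scoped Classical

/-! The identity is Möbius inversion and holds with any function `g` in place of `d ↦ ω(n - d)`:
grouping the terms of `∑_{m ≤ N} μ(m) ∑_{k ≤ N/m} g(mk)` by `d = mk` gives
`∑_{d ≤ N} (∑_{m ∣ d} μ(m)) g(d)`, and the inner sum is `1` for `d = 1` and `0` otherwise. -/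

open Finset ArithmeticFunction
open scoped ArithmeticFunction.Moebius

lemma sum_Icc_div_mul_eq_sum_filter_dvd {M : Type*} [AddCommMonoid M] (F : ℕ → M)
    {m : ℕ} (hm : 0 < m) (N : ℕ) :
    ∑ k ∈ Icc 1 (N / m), F (m * k) = ∑ d ∈ Icc 1 N with m ∣ d, F d := by
  refine sum_nbij' (m * ·) (· / m) ?_ ?_ ?_ ?_ (fun _ _ => rfl)
  · intro k hk
    simp only [mem_filter, mem_Icc] at hk ⊢
    refine ⟨⟨Nat.mul_pos hm hk.1, ?_⟩, dvd_mul_right m k⟩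
    rw [mul_comm]
    exact (Nat.le_div_iff_mul_le hm).mp hk.2
  · intro d hd
    simp only [mem_filter, mem_Icc] at hd ⊢
    obtain ⟨⟨hd1, hdN⟩, hmd⟩ := hd
    exact ⟨(Nat.one_le_div_iff hm).mpr (Nat.le_of_dvd hd1 hmd), Nat.div_le_div_right hdN⟩
  · intro k _
    simp [Nat.mul_div_cancel_left k hm]
  · intro d hd
    rw [mem_filter] at hd
    exact Nat.mul_div_cancel' hd.2

lemma sum_Icc_sum_filter_dvd_eq_sum_divisors {M : Type*} [AddCommMonoid M] (F : ℕ → ℕ → M)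
    (N : ℕ) :
    ∑ m ∈ Icc 1 N, ∑ d ∈ Icc 1 N with m ∣ d, F m d = ∑ d ∈ Icc 1 N, ∑ m ∈ d.divisors, F m d := by
  refine sum_comm' fun m d => ?_
  simp only [mem_Icc, mem_filter, Nat.mem_divisors]
  constructor
  · rintro ⟨-, ⟨hd1, hdN⟩, hmd⟩
    exact ⟨⟨hmd, by omega⟩, hd1, hdN⟩
  · rintro ⟨⟨hmd, hd0⟩, hd1, hdN⟩
    have := Nat.le_of_dvd (by omega) hmd
    exact ⟨⟨Nat.pos_of_dvd_of_pos hmd (by omega), by omega⟩, ⟨hd1, hdN⟩, hmd⟩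

lemma sum_divisors_moebius {R : Type*} [Ring R] (d : ℕ) :
    ∑ m ∈ d.divisors, (μ m : R) = if d = 1 then 1 else 0 := by
  have h := coe_mul_zeta_apply (f := (μ : ArithmeticFunction R)) (x := d)
  rw [coe_moebius_mul_coe_zeta, one_apply] at h
  exact h.symm

theorem sum_moebius_mul_sum_Icc_div {R : Type*} [Ring R] (g : ℕ → R) {N : ℕ} (hN : 1 ≤ N) :
    ∑ m ∈ Icc 1 N, (μ m : R) * ∑ k ∈ Icc 1 (N / m), g (m * k) = g 1 := by
  calc ∑ m ∈ Icc 1 N, (μ m : R) * ∑ k ∈ Icc 1 (N / m), g (m * k)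
      = ∑ m ∈ Icc 1 N, ∑ d ∈ Icc 1 N with m ∣ d, (μ m : R) * g d := by
        refine sum_congr rfl fun m hm => ?_
        rw [mul_sum, sum_Icc_div_mul_eq_sum_filter_dvd (fun d => (μ m : R) * g d)
          (mem_Icc.mp hm).1]
    _ = ∑ d ∈ Icc 1 N, (∑ m ∈ d.divisors, (μ m : R)) * g d := by
        rw [sum_Icc_sum_filter_dvd_eq_sum_divisors]
        simp only [sum_mul]
    _ = g 1 := by
        simp only [sum_divisors_moebius, ite_mul, one_mul, zero_mul, sum_ite_eq', mem_Icc,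
          le_refl, hN, and_self, if_true]

lemma pentaSum_eq_sum_Icc_div (n : ℕ) {m : ℕ} (hm : 0 < m) (hmn : m ≤ n) :
    pentaSum n m = ∑ k ∈ Icc 1 (n / m), pentaCoeff ((n : ℤ) - (m * k : ℕ)) := by
  have hdiv : n / m = (n - m) / m + 1 := by
    rw [← Nat.add_div_right _ hm, Nat.sub_add_cancel hmn]
  rw [pentaSum, ← Ico_add_one_right_eq_Icc, sum_Ico_eq_sum_range, hdiv, Nat.add_sub_cancel]
  refine sum_congr rfl fun j _ => ?_
  congr 1
  push_cast
  ring

theorem euler_type_moebius (n : ℕ) (hn : 1 < n) :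
    pentaCoeff ((n : ℤ) - 1) =
      ∑ m ∈ Finset.Icc 1 n, (ArithmeticFunction.moebius m : ℤ) * pentaSum n m := by
  have hsum : ∀ m ∈ Icc 1 n, (μ m : ℤ) * pentaSum n m
      = (μ m : ℤ) * ∑ k ∈ Icc 1 (n / m), pentaCoeff ((n : ℤ) - (m * k : ℕ)) := fun m hm => by
    rw [pentaSum_eq_sum_Icc_div n (mem_Icc.mp hm).1 (mem_Icc.mp hm).2]
  have hinv := sum_moebius_mul_sum_Icc_div (fun d => pentaCoeff ((n : ℤ) - d)) hn.le
  simp only [Int.cast_id, Nat.cast_one] at hinv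
  rw [sum_congr rfl hsum, hinv]
end

section
/- Let c_ψ(m) denote the number of relatively prime compositions of m, i.e., ordered sequences (a_1, …, a_k) of positive integers summing to m with gcd(a_1, …, a_k) = 1. Then for every positive integer n, ∑_{k=1}^{n} 2^{k−1}·ω(n−k) = ∑_{m=1}^{n} c_ψ(m) · ( ∑_{j=0}^{⌊(n−m)/m⌋} ω((n−m) − j·m) ). -/
/-!
Every composition of `k` is, in exactly one way, a relatively prime composition of `k / g`
with all parts multiplied by `g`, the gcd of its parts. Hence `2 ^ (k - 1) = ∑_{d ∣ k} c_ψ(d)`.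
Substituting this into the left-hand side and exchanging the order of summation, the coefficient
of `c_ψ(m)` is the sum of `ω(n - k)` over the multiples `k = (j + 1) m ≤ n`, which is the inner
sum on the right.
-/

open scoped Classical

/-- The number of relatively prime compositions of `m`, i.e. ordered sequences of
positive integers summing to `m` whose greatest common divisor is `1`. -/
noncomputable def relPrimeCompositions (m : ℕ) : ℕ :=
  ((Finset.univ : Finset (Composition m)).filter
    fun c => (c.blocks : Multiset ℕ).gcd = 1).card

open Finset

namespace Composition

variable {m g : ℕ}

def scale (g : ℕ) (hg : 0 < g) (c : Composition m) : Composition (g * m) where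
  blocks := c.blocks.map (g * ·)
  blocks_pos hi := by
    obtain ⟨a, ha, rfl⟩ := List.mem_map.mp hi
    exact Nat.mul_pos hg (c.blocks_pos ha)
  blocks_sum := by rw [List.sum_map_mul_left, List.map_id', c.blocks_sum]

theorem scale_injective (hg : 0 < g) : Function.Injective (scale (m := m) g hg) := fun _ _ h =>
  Composition.ext <| (List.map_injective_iff.mpr (mul_right_injective₀ hg.ne'))
    (congrArg Composition.blocks h)

theorem gcd_scale (hg : 0 < g) (c : Composition m) :
    ((c.scale g hg).blocks : Multiset ℕ).gcd = g * (c.blocks : Multiset ℕ).gcd := by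
  rw [scale, ← Multiset.map_coe, Multiset.gcd_map_mul, normalize_eq]

theorem exists_scale_eq_of_forall_dvd (hg : 0 < g) (c : Composition (g * m))
    (hdvd : ∀ b ∈ c.blocks, g ∣ b) : ∃ d : Composition m, d.scale g hg = c := by
  have hmap : (c.blocks.map (· / g)).map (g * ·) = c.blocks := by
    rw [List.map_map]
    exact (List.map_congr_left fun b hb => Nat.mul_div_cancel' (hdvd b hb)).trans (List.map_id _)
  refine ⟨⟨c.blocks.map (· / g), fun hi => ?_, ?_⟩, Composition.ext hmap⟩
  · obtain ⟨b, hb, rfl⟩ := List.mem_map.mp hi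
    exact Nat.div_pos (Nat.le_of_dvd (c.blocks_pos hb) (hdvd b hb)) hg
  · apply Nat.eq_of_mul_eq_mul_left hg
    rw [← List.map_id' (c.blocks.map (· / g)), ← List.sum_map_mul_left, hmap, c.blocks_sum]

theorem gcd_blocks_dvd (c : Composition m) : (c.blocks : Multiset ℕ).gcd ∣ m := by
  have := Multiset.dvd_sum fun b hb => Multiset.gcd_dvd (s := (c.blocks : Multiset ℕ)) hb
  rwa [Multiset.sum_coe, c.blocks_sum] at this

end Composition

theorem card_compositions_gcd_eq (m : ℕ) {g : ℕ} (hg : 0 < g) :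
    #{c : Composition (g * m) | (c.blocks : Multiset ℕ).gcd = g} = relPrimeCompositions m := by
  refine (card_nbij (Composition.scale g hg) (fun c hc => ?_)
    (Composition.scale_injective hg).injOn fun c hc => ?_).symm
  · simp only [coe_filter, mem_univ, true_and, Set.mem_ofPred_eq] at hc ⊢
    rw [Composition.gcd_scale, hc, mul_one]
  · simp only [coe_filter, mem_univ, true_and, Set.mem_ofPred_eq] at hc ⊢
    have hdvd : ∀ b ∈ c.blocks, g ∣ b := fun b hb => hc ▸ Multiset.gcd_dvd (by exact_mod_cast hb)
    obtain ⟨d, rfl⟩ := Composition.exists_scale_eq_of_forall_dvd hg c hdvd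
    refine ⟨d, ?_, rfl⟩
    rw [Composition.gcd_scale] at hc
    exact Nat.eq_of_mul_eq_mul_left hg (hc.trans (mul_one g).symm)

theorem sum_divisors_relPrimeCompositions {k : ℕ} (hk : 0 < k) :
    ∑ d ∈ k.divisors, relPrimeCompositions d = 2 ^ (k - 1) := by
  rw [← Nat.sum_div_divisors, ← composition_card, ← card_univ,
    card_eq_sum_card_fiberwise (f := fun c : Composition k => (c.blocks : Multiset ℕ).gcd)
      fun c _ => Nat.mem_divisors.mpr ⟨c.gcd_blocks_dvd, hk.ne'⟩]
  refine sum_congr rfl fun g hg => ?_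
  obtain ⟨m, rfl⟩ := (Nat.mem_divisors.mp hg).1
  rw [Nat.mul_div_cancel_left m (Nat.pos_of_mem_divisors hg),
    card_compositions_gcd_eq m (Nat.pos_of_mem_divisors hg)]

theorem sum_Icc_sum_divisors_mul {R : Type*} [NonUnitalNonAssocSemiring R] (a f : ℕ → R)
    (n : ℕ) :
    ∑ k ∈ Icc 1 n, (∑ d ∈ k.divisors, a d) * f k =
      ∑ d ∈ Icc 1 n, a d * ∑ k ∈ Icc 1 n with d ∣ k, f k := by
  simp_rw [sum_mul, mul_sum]
  refine sum_comm' fun k d => ?_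
  simp only [mem_Icc, Nat.mem_divisors, mem_filter]
  constructor
  · rintro ⟨⟨hk1, hkn⟩, hdk, -⟩
    exact ⟨⟨⟨hk1, hkn⟩, hdk⟩, Nat.pos_of_dvd_of_pos hdk hk1, (Nat.le_of_dvd hk1 hdk).trans hkn⟩
  · rintro ⟨⟨⟨hk1, hkn⟩, hdk⟩, -⟩
    exact ⟨⟨hk1, hkn⟩, hdk, by omega⟩

theorem sum_Icc_filter_dvd {M : Type*} [AddCommMonoid M] (f : ℕ → M) {m : ℕ} (hm : 0 < m)
    (n : ℕ) : ∑ k ∈ Icc 1 n with m ∣ k, f k = ∑ j ∈ range (n / m), f (m * (j + 1)) := by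
  have hmultiples : {k ∈ Icc 1 n | m ∣ k} = (range (n / m)).map
      ⟨fun j => m * (j + 1), (mul_right_injective₀ hm.ne').comp (add_left_injective 1)⟩ := by
    ext k
    simp only [mem_filter, mem_Icc, mem_map, mem_range, Function.Embedding.coeFn_mk]
    constructor
    · rintro ⟨⟨hk1, hkn⟩, j, rfl⟩
      have hj : 0 < j := Nat.pos_of_ne_zero (by rintro rfl; simp at hk1)
      have hjn : j ≤ n / m := (Nat.le_div_iff_mul_le hm).mpr (by rwa [mul_comm])
      exact ⟨j - 1, by omega, by rw [Nat.sub_add_cancel hj]⟩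
    · rintro ⟨j, hj, rfl⟩
      exact ⟨⟨Nat.mul_pos hm j.succ_pos, by rw [mul_comm]; exact (Nat.le_div_iff_mul_le hm).mp hj⟩, dvd_mul_right m _⟩
  rw [hmultiples, sum_map]
  rfl

theorem pentaSum_eq_sum_multiples {n m : ℕ} (hm : 0 < m) (hmn : m ≤ n) :
    pentaSum n m = ∑ k ∈ Icc 1 n with m ∣ k, pentaCoeff (n - k) := by
  rw [sum_Icc_filter_dvd _ hm, pentaSum, ← Nat.div_eq_sub_div hm hmn]
  refine sum_congr rfl fun j _ => ?_
  push_cast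
  congr 1
  ring

theorem euler_type_relPrimeCompositions_general (n : ℕ) :
    ∑ k ∈ Finset.Icc 1 n, (2 : ℤ) ^ (k - 1) * pentaCoeff ((n : ℤ) - k) =
      ∑ m ∈ Finset.Icc 1 n, (relPrimeCompositions m : ℤ) * pentaSum n m := by
  calc ∑ k ∈ Icc 1 n, (2 : ℤ) ^ (k - 1) * pentaCoeff ((n : ℤ) - k)
      = ∑ k ∈ Icc 1 n, (∑ d ∈ k.divisors, (relPrimeCompositions d : ℤ)) *
          pentaCoeff ((n : ℤ) - k) := by
        refine sum_congr rfl fun k hk => ?_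
        rw [← Nat.cast_sum, sum_divisors_relPrimeCompositions (mem_Icc.mp hk).1]
        push_cast
        rfl
    _ = ∑ m ∈ Icc 1 n, (relPrimeCompositions m : ℤ) * pentaSum n m := by
        rw [sum_Icc_sum_divisors_mul]
        refine sum_congr rfl fun m hm => ?_
        rw [pentaSum_eq_sum_multiples (mem_Icc.mp hm).1 (mem_Icc.mp hm).2]

theorem euler_type_relPrimeCompositions (n : ℕ) (hn : 0 < n) :
    ∑ k ∈ Finset.Icc 1 n, (2 : ℤ) ^ (k - 1) * pentaCoeff ((n : ℤ) - k) =
      ∑ m ∈ Finset.Icc 1 n, (relPrimeCompositions m : ℤ) * pentaSum n m :=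
  euler_type_relPrimeCompositions_general n
end

section
/- Let r be a positive integer and let Φ_r(m) denote the number of subsets S of {1, 2, …, m} of cardinality r such that gcd(S) is relatively prime to m. Then for every positive integer n, ∑_{k=1}^{n} C(k, r)·ω(n−k) = ∑_{m=1}^{n} Φ_r(m) · ( ∑_{j=0}^{⌊(n−m)/m⌋} ω((n−m) − j·m) ), where C(a, b) denotes the binomial coefficient. -/
open scoped Classical

/-- `PhiCard m r` is the number of subsets `S` of `{1, 2, …, m}` of cardinality `r`
such that `gcd S` is relatively prime to `m`. -/
noncomputable def PhiCard (m r : ℕ) : ℕ :=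
  ((Finset.Icc 1 m).powerset.filter
    fun S => S.card = r ∧ Nat.Coprime (S.gcd id) m).card

/-!
Sorting the `r`-subsets `S` of `{1, …, k}` by `g = gcd (gcd S) k`, division by `g` maps the class
of `g` bijectively onto the sets counted by `Φ_r (k / g)`, so `∑_{m ∣ k} Φ_r m = C(k, r)`.
The inner sum on the right is `∑ ω (n - k)` over the multiples `k ≤ n` of `m`; exchanging the
two summations turns the right-hand side into the left one, for an arbitrary function in place
of `ω`.
-/

open Finset

namespace Finset

lemma gcd_image_mul_left (g : ℕ) (s : Finset ℕ) : (s.image (g * ·)).gcd id = g * s.gcd id := by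
  rw [gcd_image]
  exact gcd_mul_left.trans (by rw [normalize_eq]; rfl)

lemma image_mul_image_div_of_forall_dvd {g : ℕ} {s : Finset ℕ} (h : ∀ x ∈ s, g ∣ x) :
    (s.image (· / g)).image (g * ·) = s := by
  rw [image_image]
  exact (image_congr fun x hx => Nat.mul_div_cancel' (h x hx)).trans image_id

lemma image_mul_left_subset_Icc_iff {g : ℕ} (hg : 0 < g) (m : ℕ) (s : Finset ℕ) :
    s.image (g * ·) ⊆ Icc 1 (g * m) ↔ s ⊆ Icc 1 m := by
  simp only [subset_iff, mem_image, mem_Icc, forall_exists_index, and_imp,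
    forall_apply_eq_imp_iff₂, Nat.one_le_iff_ne_zero, mul_ne_zero_iff, hg.ne',
    Nat.mul_le_mul_left_iff hg, ne_eq, not_false_eq_true, true_and]

lemma Icc_filter_dvd_eq_map {m : ℕ} (hm : 0 < m) (n : ℕ) :
    {k ∈ Icc 1 n | m ∣ k} =
      (range (n / m)).map ⟨fun j => (j + 1) * m, by intro a b h; simpa [hm.ne'] using h⟩ := by
  ext k
  simp only [mem_filter, mem_Icc, mem_map, mem_range, dvd_iff_exists_eq_mul_left]
  constructor
  · rintro ⟨⟨hk1, hkn⟩, q, rfl⟩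
    have hq : 0 < q := Nat.pos_of_mul_pos_right hk1
    refine ⟨q - 1, ?_, show (q - 1 + 1) * m = q * m by rw [Nat.sub_add_cancel hq]⟩
    have := (Nat.le_div_iff_mul_le hm).2 hkn
    omega
  · rintro ⟨j, hj, rfl⟩
    refine ⟨⟨Nat.mul_pos j.succ_pos hm, ?_⟩, j + 1, rfl⟩
    exact (Nat.le_div_iff_mul_le hm).1 hj

end Finset

lemma filter_gcd_eq_image_mul_left {g : ℕ} (hg : 0 < g) (m r : ℕ) :
    {S ∈ powersetCard r (Icc 1 (g * m)) | Nat.gcd (S.gcd id) (g * m) = g} =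
      {S ∈ (Icc 1 m).powerset | S.card = r ∧ Nat.Coprime (S.gcd id) m}.image (image (g * ·)) := by
  have mem_iff (T : Finset ℕ) :
      T.image (g * ·) ∈ {S ∈ powersetCard r (Icc 1 (g * m)) | Nat.gcd (S.gcd id) (g * m) = g} ↔
        T ∈ {S ∈ (Icc 1 m).powerset | S.card = r ∧ Nat.Coprime (S.gcd id) m} := by
    simp only [mem_filter, mem_powersetCard, mem_powerset, image_mul_left_subset_Icc_iff hg,
      card_image_of_injective _ (mul_right_injective₀ hg.ne'), gcd_image_mul_left,
      Nat.gcd_mul_left, Nat.mul_eq_left hg.ne', Nat.Coprime, and_assoc]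
  ext S
  rw [mem_image]
  constructor
  · intro hS
    have hdvd : ∀ x ∈ S, g ∣ x := fun x hx =>
      (mem_filter.1 hS).2 ▸ (Nat.gcd_dvd_left _ _).trans (gcd_dvd hx)
    refine ⟨S.image (· / g), (mem_iff _).1 ?_, image_mul_image_div_of_forall_dvd hdvd⟩
    rwa [image_mul_image_div_of_forall_dvd hdvd]
  · rintro ⟨T, hT, rfl⟩
    exact (mem_iff T).2 hT

lemma card_filter_gcd_eq_PhiCard {g : ℕ} (hg : 0 < g) (m r : ℕ) :
    #{S ∈ powersetCard r (Icc 1 (g * m)) | Nat.gcd (S.gcd id) (g * m) = g} = PhiCard m r := by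
  rw [filter_gcd_eq_image_mul_left hg, PhiCard,
    card_image_of_injective _ (image_injective (mul_right_injective₀ hg.ne'))]

lemma sum_divisors_PhiCard {k : ℕ} (hk : k ≠ 0) (r : ℕ) :
    ∑ m ∈ k.divisors, PhiCard m r = k.choose r := by
  have hmaps : Set.MapsTo (fun S : Finset ℕ => Nat.gcd (S.gcd id) k)
      (powersetCard r (Icc 1 k)) k.divisors := fun S _ =>
    Nat.mem_divisors.2 ⟨Nat.gcd_dvd_right _ _, hk⟩
  calc ∑ m ∈ k.divisors, PhiCard m r
      = ∑ g ∈ k.divisors, PhiCard (k / g) r := (Nat.sum_div_divisors k _).symm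
    _ = ∑ g ∈ k.divisors, #{S ∈ powersetCard r (Icc 1 k) | Nat.gcd (S.gcd id) k = g} := by
        refine sum_congr rfl fun g hg => ?_
        have hgk := Nat.dvd_of_mem_divisors hg
        rw [← card_filter_gcd_eq_PhiCard (Nat.pos_of_mem_divisors hg), Nat.mul_div_cancel' hgk]
    _ = #(powersetCard r (Icc 1 k)) := (card_eq_sum_card_fiberwise hmaps).symm
    _ = k.choose r := by rw [card_powersetCard, Nat.card_Icc, Nat.add_sub_cancel]

lemma sum_range_sub_mul_eq_sum_filter_dvd {M : Type*} [AddCommMonoid M] (f : ℤ → M)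
    {m n : ℕ} (hm : 0 < m) (hmn : m ≤ n) :
    ∑ j ∈ range ((n - m) / m + 1), f ((n - m : ℤ) - j * m) =
      ∑ k ∈ Icc 1 n with m ∣ k, f (n - k) := by
  have hlen : (n - m) / m + 1 = n / m := by
    rw [← Nat.add_div_right _ hm, Nat.sub_add_cancel hmn]
  rw [Icc_filter_dvd_eq_map hm, sum_map, hlen]
  refine sum_congr rfl fun j _ => congrArg f ?_
  change _ = (n : ℤ) - ((j + 1) * m : ℕ)
  push_cast
  ring

theorem sum_choose_smul_eq_sum_PhiCard_smul {M : Type*} [AddCommMonoid M] (f : ℤ → M) (r n : ℕ) :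
    ∑ k ∈ Icc 1 n, k.choose r • f (n - k) =
      ∑ m ∈ Icc 1 n, PhiCard m r • ∑ j ∈ range ((n - m) / m + 1), f ((n - m : ℤ) - j * m) := by
  have hswap (m k : ℕ) : m ∈ Icc 1 n ∧ k ∈ {k ∈ Icc 1 n | m ∣ k} ↔
      m ∈ k.divisors ∧ k ∈ Icc 1 n := by
    simp only [mem_Icc, mem_filter, Nat.mem_divisors]
    constructor
    · rintro ⟨-, hk, hmk⟩
      exact ⟨⟨hmk, by omega⟩, hk⟩
    · rintro ⟨⟨hmk, -⟩, hk⟩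
      have := Nat.le_of_dvd (by omega) hmk
      have := Nat.pos_of_dvd_of_pos hmk (by omega)
      exact ⟨⟨by omega, by omega⟩, hk, hmk⟩
  calc ∑ k ∈ Icc 1 n, k.choose r • f (n - k)
      = ∑ k ∈ Icc 1 n, ∑ m ∈ k.divisors, PhiCard m r • f (n - k) := by
        refine sum_congr rfl fun k hk => ?_
        rw [← sum_smul, sum_divisors_PhiCard (Nat.one_le_iff_ne_zero.1 (mem_Icc.1 hk).1)]
    _ = ∑ m ∈ Icc 1 n, ∑ k ∈ Icc 1 n with m ∣ k, PhiCard m r • f (n - k) :=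
        (sum_comm' hswap).symm
    _ = _ := by
        refine sum_congr rfl fun m hm => ?_
        rw [mem_Icc] at hm
        rw [sum_range_sub_mul_eq_sum_filter_dvd f hm.1 hm.2, smul_sum]

theorem euler_type_PhiCard_general (r : ℕ) (n : ℕ) :
    ∑ k ∈ Finset.Icc 1 n, (k.choose r : ℤ) * pentaCoeff ((n : ℤ) - k) =
      ∑ m ∈ Finset.Icc 1 n, (PhiCard m r : ℤ) * pentaSum n m := by
  simpa only [nsmul_eq_mul, pentaSum] using sum_choose_smul_eq_sum_PhiCard_smul pentaCoeff r n

theorem euler_type_PhiCard (r : ℕ) (hr : 0 < r) (n : ℕ) (hn : 0 < n) :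
    ∑ k ∈ Finset.Icc 1 n, (k.choose r : ℤ) * pentaCoeff ((n : ℤ) - k) =
      ∑ m ∈ Finset.Icc 1 n, (PhiCard m r : ℤ) * pentaSum n m :=
  euler_type_PhiCard_general r n
end

section
/- For every nonnegative integer n, ∑_{k=0}^{n} (−1)^k · qq(k) · ω(n−k) equals 1 if n = 0; equals 2 if n is a nonzero perfect square and n is even; equals −2 if n is a nonzero perfect square and n is odd; and equals 0 otherwise. Here qq(k) is the number of partitions of k into pairwise distinct odd parts. -/
/-!
Multiplying the two generating functions gives
`∏ (1 - X^(2i+1)) · ∏ (1 - X^(i+1)) = ∏ (1 - X^(2i+1))² (1 - X^(2i+2))`, which by Gauss's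
identity (the Jacobi triple product at `z = -1`) is `∑_{k ∈ ℤ} (-1)^k X^(k²)`. The first factor is
the signed generating function of partitions into distinct odd parts and the second is
`∑ ω(m) X^m` by Euler's pentagonal number theorem, so the sum in question is the coefficient of
`X^n` in `∑_{k ∈ ℤ} (-1)^k X^(k²)`.

Gauss's identity is the limit of its finite form
`∏_{i<n} (1 - X^(2i+1))² = ∑_{k ≤ 2n} (-1)^(n+k) X^((k-n)²) [2n, k]_{X²}`, which is the
`q`-binomial theorem applied to `∏_{i<2n} (X^(2n-1) - X^(2i))`. After multiplication by
`(X²; X²)_n`, the `k`-th term is `X^((k-n)²)` times a product of factors `1 - X^(2j)` with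
`j > n - |k - n|`, so it agrees with `X^((k-n)²)` in all degrees up to `2n`.
-/

open scoped Classical

/-- `distinctOddPartitions k` is the number of partitions of `k` into pairwise distinct
odd parts (with value `1` at `k = 0`). -/
noncomputable def distinctOddPartitions (k : ℕ) : ℕ :=
  ((Finset.univ : Finset (Nat.Partition k)).filter
    fun p => p.parts.Nodup ∧ ∀ x ∈ p.parts, Odd x).card

open Filter Finset PowerSeries Topology
open scoped PowerSeries.WithPiTopology

theorem prod_range_two_mul {M : Type*} [CommMonoid M] (f : ℕ → M) (m : ℕ) :
    ∏ i ∈ range (2 * m), f i = (∏ i ∈ range m, f (2 * i)) * ∏ i ∈ range m, f (2 * i + 1) := by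
  induction m with
  | zero => simp
  | succ m ih =>
    rw [show 2 * (m + 1) = 2 * m + 1 + 1 by ring, prod_range_succ, prod_range_succ, ih,
      prod_range_succ, prod_range_succ]
    ac_rfl

section QBinomial

variable {R : Type*} [CommRing R]

/-- The `q`-Pochhammer symbol `(q; q)_n`. -/
def qPochhammer (q : R) (n : ℕ) : R := ∏ i ∈ range n, (1 - q ^ (i + 1))

/-- The Gaussian binomial coefficient `[n, k]_q`, through the `q`-Pascal rule. -/
def qBinomial (q : R) : ℕ → ℕ → R
  | _, 0 => 1
  | 0, _ + 1 => 0
  | n + 1, k + 1 => qBinomial q n k + q ^ (k + 1) * qBinomial q n (k + 1)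

variable (q : R)

@[simp]
theorem qBinomial_zero_right (n : ℕ) : qBinomial q n 0 = 1 := by
  cases n <;> rfl

@[simp]
theorem qBinomial_zero_succ (k : ℕ) : qBinomial q 0 (k + 1) = 0 := rfl

theorem qBinomial_succ_succ (n k : ℕ) :
    qBinomial q (n + 1) (k + 1) = qBinomial q n k + q ^ (k + 1) * qBinomial q n (k + 1) := rfl

theorem qBinomial_eq_zero_of_lt {n k : ℕ} (h : n < k) : qBinomial q n k = 0 := by
  induction n generalizing k with
  | zero => obtain ⟨k, rfl⟩ := Nat.exists_eq_add_of_lt h; simp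
  | succ n ih =>
    obtain ⟨k, rfl⟩ := Nat.exists_eq_succ_of_ne_zero (by omega : k ≠ 0)
    rw [qBinomial_succ_succ, ih (by omega), ih (by omega), mul_zero, add_zero]

@[simp]
theorem qBinomial_self (n : ℕ) : qBinomial q n n = 1 := by
  induction n with
  | zero => rfl
  | succ n ih => rw [qBinomial_succ_succ, ih, qBinomial_eq_zero_of_lt q n.lt_succ_self, mul_zero,
      add_zero]

theorem qPochhammer_succ (n : ℕ) : qPochhammer q (n + 1) = qPochhammer q n * (1 - q ^ (n + 1)) :=
  prod_range_succ _ _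

theorem qBinomial_add_mul_qPochhammer (i j : ℕ) :
    qBinomial q (i + j) i * qPochhammer q i * qPochhammer q j = qPochhammer q (i + j) := by
  induction j generalizing i with
  | zero => simp [qPochhammer]
  | succ j ihj =>
    induction i with
    | zero => simp [qPochhammer]
    | succ i ihi =>
      have h := ihj (i + 1)
      rw [Nat.add_right_comm] at h
      rw [← Nat.add_assoc] at ihi
      rw [← Nat.add_assoc, Nat.add_right_comm i 1 j, qBinomial_succ_succ,
        qPochhammer_succ q (i + j + 1)]
      rw [qPochhammer_succ q i, qPochhammer_succ q j] at *
      linear_combination (1 - q ^ (i + 1)) * ihi + q ^ (i + 1) * (1 - q ^ (j + 1)) * h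

/-- The `q`-binomial theorem. -/
theorem prod_add_mul_pow_eq_sum_qBinomial (a b : R) (N : ℕ) :
    ∏ i ∈ range N, (a + b * q ^ i) =
      ∑ p ∈ antidiagonal N, q ^ p.1.choose 2 * qBinomial q N p.1 * b ^ p.1 * a ^ p.2 := by
  induction N generalizing b with
  | zero => simp
  | succ N ih =>
    set g : ℕ × ℕ → R := fun p ↦ q ^ p.1.choose 2 * qBinomial q N p.1 * (b * q) ^ p.1 * a ^ p.2
    have hshift : ∑ p ∈ antidiagonal N, g p * a =
        a ^ (N + 1) + ∑ p ∈ antidiagonal N, g (p.1 + 1, p.2) := by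
      have h := (Nat.sum_antidiagonal_succ (n := N) (f := g)).symm.trans
        (Nat.sum_antidiagonal_succ' (f := g))
      simp only [g, qBinomial_eq_zero_of_lt q N.lt_succ_self] at h
      simpa [g, pow_succ, mul_assoc] using h.symm
    rw [prod_range_succ', pow_zero, mul_one]
    simp_rw [pow_succ', ← mul_assoc b]
    rw [ih, Nat.sum_antidiagonal_succ, mul_add, sum_mul, sum_mul, hshift, add_assoc,
      ← sum_add_distrib]
    simp only [g, qBinomial_succ_succ, Nat.choose_succ_succ', Nat.choose_one_right,
      Nat.choose_zero_succ, pow_zero, qBinomial_zero_right, mul_one, one_mul, add_right_inj]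
    exact sum_congr rfl fun p _ ↦ by ring

theorem two_mul_natCast_choose_two (k : ℕ) : 2 * (k.choose 2 : ℤ) = k * (k - 1) := by
  have h : k.choose 2 * 2 = k * (k - 1) := by
    rw [Nat.choose_two_right, Nat.div_mul_cancel (Nat.even_mul_pred_self k).two_dvd]
  rcases k with _ | k
  · simp
  · have h' := congrArg (Nat.cast (R := ℤ)) h
    push_cast at h' ⊢
    linear_combination h'

theorem prod_mul_pow_sub_sq_pow (x z : R) (n : ℕ) :
    ∏ i ∈ range (2 * (n + 1)), (z * x ^ (2 * n + 1) - (x ^ 2) ^ i) =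
      (-1) ^ (n + 1) * x ^ ((n + 1) * n + (2 * n + 1) * (n + 1)) *
        ∏ i ∈ range (n + 1), (1 - z * x ^ (2 * i + 1)) * (z - x ^ (2 * i + 1)) := by
  have hlow : ∏ i ∈ range (n + 1), (z * x ^ (2 * n + 1) - (x ^ 2) ^ i) =
      (-1) ^ (n + 1) * x ^ ((n + 1) * n) * ∏ i ∈ range (n + 1), (1 - z * x ^ (2 * i + 1)) := by
    calc _ = ∏ i ∈ range (n + 1), -1 * (x ^ 2) ^ i * (1 - z * x ^ (2 * (n - i) + 1)) := by
          refine prod_congr rfl fun i hi ↦ ?_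
          rw [← pow_mul, show 2 * n + 1 = 2 * i + (2 * (n - i) + 1) by
            simp only [mem_range] at hi; omega, pow_add]
          ring
      _ = _ := by
          rw [prod_mul_distrib, prod_mul_distrib, prod_const, card_range, prod_pow_eq_pow_sum,
            ← pow_mul, mul_comm 2, sum_range_id_mul_two, Nat.add_sub_cancel,
            ← prod_range_reflect (fun i ↦ 1 - z * x ^ (2 * i + 1))]
          simp
  have hhigh : ∏ i ∈ range (n + 1), (z * x ^ (2 * n + 1) - (x ^ 2) ^ (n + 1 + i)) =
      x ^ ((2 * n + 1) * (n + 1)) * ∏ i ∈ range (n + 1), (z - x ^ (2 * i + 1)) := by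
    calc _ = ∏ i ∈ range (n + 1), x ^ (2 * n + 1) * (z - x ^ (2 * i + 1)) := by
          refine prod_congr rfl fun i _ ↦ ?_
          rw [← pow_mul, show 2 * (n + 1 + i) = 2 * n + 1 + (2 * i + 1) by ring, pow_add]
          ring
      _ = _ := by rw [prod_mul_distrib, prod_const, card_range, pow_mul]
  rw [two_mul, prod_range_add, hlow, hhigh, prod_mul_distrib, pow_add]
  ring

/-- A finite form of the Jacobi triple product. -/
theorem prod_one_sub_mul_pow_mul_sub_pow [IsDomain R] {x : R} (hx : x ≠ 0) (z : R) (n : ℕ) :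
    ∏ i ∈ range n, (1 - z * x ^ (2 * i + 1)) * (z - x ^ (2 * i + 1)) =
      ∑ k ∈ range (2 * n + 1), (-1) ^ (n + k) * z ^ (2 * n - k) *
        x ^ (((k : ℤ) - n).natAbs ^ 2) * qBinomial (x ^ 2) (2 * n) k := by
  rcases n with _ | n
  · simp
  have hqbin := prod_add_mul_pow_eq_sum_qBinomial (x ^ 2) (z * x ^ (2 * n + 1)) (-1) (2 * (n + 1))
  simp only [neg_one_mul, ← sub_eq_add_neg, prod_mul_pow_sub_sq_pow,
    Nat.sum_antidiagonal_eq_sum_range_succ_mk] at hqbin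
  have hc : (-1) ^ (n + 1) * x ^ ((n + 1) * n + (2 * n + 1) * (n + 1)) ≠ 0 :=
    mul_ne_zero (pow_ne_zero _ (neg_ne_zero.mpr one_ne_zero)) (pow_ne_zero _ hx)
  rw [← mul_right_inj' hc, hqbin, mul_sum]
  refine sum_congr rfl fun k hk ↦ ?_
  have hk : k ≤ 2 * (n + 1) := Nat.lt_succ_iff.mp (mem_range.mp hk)
  have hexp : 2 * k.choose 2 + (2 * n + 1) * (2 * (n + 1) - k) =
      (n + 1) * n + (2 * n + 1) * (n + 1) + ((k : ℤ) - (n + 1 : ℕ)).natAbs ^ 2 := by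
    have := two_mul_natCast_choose_two k
    zify [hk]
    rw [sq_abs]
    linear_combination this
  have hsign : (-1 : R) ^ k = (-1) ^ (n + 1) * (-1) ^ (n + 1 + k) := by
    rw [← pow_add, show n + 1 + (n + 1 + k) = k + 2 * (n + 1) by ring, pow_add, pow_mul]
    simp
  calc _ = (-1) ^ k * z ^ (2 * (n + 1) - k) *
        x ^ (2 * k.choose 2 + (2 * n + 1) * (2 * (n + 1) - k)) *
        qBinomial (x ^ 2) (2 * (n + 1)) k := by simp only [pow_add, pow_mul]; ring
    _ = _ := by rw [hexp, hsign, pow_add]; ring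

theorem qPochhammer_mul_qBinomial [IsDomain R] {q : R} (hq : ∀ m, qPochhammer q m ≠ 0)
    {a b k l : ℕ} (hk : k = a ∨ k = b) (hal : a ≤ l) :
    qPochhammer q l * qBinomial q (a + b) k =
      (∏ i ∈ Ico a l, (1 - q ^ (i + 1))) * ∏ i ∈ Ico b (a + b), (1 - q ^ (i + 1)) := by
  have h : qBinomial q (a + b) k * qPochhammer q a * qPochhammer q b = qPochhammer q (a + b) := by
    rcases hk with rfl | rfl
    · exact qBinomial_add_mul_qPochhammer q k b
    · rw [add_comm a, mul_right_comm]
      exact qBinomial_add_mul_qPochhammer q k a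
  have hl : qPochhammer q a * ∏ i ∈ Ico a l, (1 - q ^ (i + 1)) = qPochhammer q l :=
    prod_range_mul_prod_Ico _ hal
  have hab : qPochhammer q b * ∏ i ∈ Ico b (a + b), (1 - q ^ (i + 1)) = qPochhammer q (a + b) :=
    prod_range_mul_prod_Ico _ (Nat.le_add_left b a)
  refine mul_right_cancel₀ (mul_ne_zero (hq a) (hq b)) ?_
  linear_combination qPochhammer q l * h - qPochhammer q (a + b) * hl -
    qPochhammer q a * (∏ i ∈ Ico a l, (1 - q ^ (i + 1))) * hab

end QBinomial

section GaussSeries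

variable {R : Type*} [Ring R]

variable (R) in
/-- `∑_{k ∈ ℤ} (-1)^k X^(k²)`, written through its coefficients. -/
noncomputable def gaussSeries : R⟦X⟧ :=
  mk fun N ↦ if N = 0 then 1 else if IsSquare N ∧ Even N then 2
    else if IsSquare N ∧ Odd N then -2 else 0

theorem coeff_gaussSeries_mul_self (s : ℕ) :
    coeff (s * s) (gaussSeries R) = if s = 0 then 1 else 2 * (-1) ^ s := by
  rcases eq_or_ne s 0 with rfl | hs0
  · simp [gaussSeries]
  have hsq : IsSquare (s * s) := ⟨s, rfl⟩
  rcases Nat.even_or_odd s with hs | hs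
  · simp [gaussSeries, hs0, hsq, hs, hs.neg_one_pow]
  · simp [gaussSeries, hs0, hsq, Nat.even_mul, Nat.not_even_iff_odd.mpr hs, hs.mul hs,
      hs.neg_one_pow]

theorem coeff_gaussSeries_of_not_isSquare {N : ℕ} (hN : ¬IsSquare N) :
    coeff N (gaussSeries R) = 0 := by
  have : N ≠ 0 := by rintro rfl; exact hN ⟨0, rfl⟩
  simp [gaussSeries, hN, this]

theorem sum_range_neg_one_pow_mul_ite_natAbs_sq {n N : ℕ} (hN : N ≤ n) :
    ∑ k ∈ range (2 * n + 1), (-1 : R) ^ (n + k) * (if ((k : ℤ) - n).natAbs ^ 2 = N then 1 else 0) =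
      coeff N (gaussSeries R) := by
  simp only [mul_ite, mul_one, mul_zero, ← sum_filter]
  by_cases hsq : IsSquare N
  swap
  · rw [coeff_gaussSeries_of_not_isSquare hsq, filter_eq_empty_iff.mpr, sum_empty]
    exact fun k _ hk ↦ hsq ⟨_, hk ▸ sq _⟩
  obtain ⟨s, rfl⟩ := hsq
  have hs : s ≤ n := by nlinarith
  have hfilter : (range (2 * n + 1)).filter (fun k : ℕ ↦ ((k : ℤ) - n).natAbs ^ 2 = s * s) =
      {n - s, n + s} := by
    ext k
    simp only [mem_filter, mem_range, mem_insert, mem_singleton, sq, Nat.mul_self_inj]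
    omega
  have hsign : ∀ k ∈ ({n - s, n + s} : Finset ℕ), (-1 : R) ^ (n + k) = (-1) ^ s := by
    simp only [mem_insert, mem_singleton]
    rintro k hk
    rw [neg_one_pow_eq_pow_mod_two, neg_one_pow_eq_pow_mod_two (n := s)]
    congr 1
    omega
  rw [hfilter, sum_congr rfl hsign, sum_const, coeff_gaussSeries_mul_self]
  rcases eq_or_ne s 0 with rfl | hs0
  · simp
  · rw [card_pair (by omega), if_neg hs0, two_smul, two_mul]

end GaussSeries

section PowerSeries

variable {R : Type*} [CommRing R]

theorem coeff_X_pow_mul_prod_one_sub_X_pow [Nontrivial R] {ι : Type*} (s : Finset ι) (e : ι → ℕ)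
    {a N : ℕ} (h : ∀ i ∈ s, N < a + e i) :
    coeff N (X ^ a * ∏ i ∈ s, (1 - X ^ e i) : R⟦X⟧) = if N = a then 1 else 0 := by
  rw [coeff_X_pow_mul']
  by_cases ha : a ≤ N
  · rw [if_pos ha, ← one_mul (∏ i ∈ s, _), coeff_mul_prod_one_sub_of_lt_order, coeff_one]
    · simp only [show N - a = 0 ↔ N = a by omega]
    intro i hi
    rw [order_X_pow]
    exact_mod_cast (by have := h i hi; omega : N - a < e i)
  · rw [if_neg ha, if_neg (by omega)]

theorem qPochhammer_ne_zero_of_constantCoeff_eq_zero [Nontrivial R] {q : R⟦X⟧}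
    (hq : constantCoeff q = 0) (m : ℕ) : qPochhammer q m ≠ 0 := fun h ↦ by
  simpa [qPochhammer, map_prod, hq] using congrArg constantCoeff h

theorem coeff_prod_one_sub_X_pow_sq_mul_qPochhammer [IsDomain R] {n N : ℕ} (hN : N ≤ 2 * n) :
    coeff N ((∏ i ∈ range n, (1 - X ^ (2 * i + 1)) ^ 2) * qPochhammer (X ^ 2) n : R⟦X⟧) =
      ∑ k ∈ range (2 * n + 1), (-1) ^ (n + k) * if ((k : ℤ) - n).natAbs ^ 2 = N then 1 else 0 := by
  have hJ := prod_one_sub_mul_pow_mul_sub_pow (X_ne_zero (R := R)) 1 n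
  simp only [one_mul, one_pow, mul_one, ← sq] at hJ
  rw [hJ, sum_mul, map_sum]
  refine sum_congr rfl fun k hk ↦ ?_
  have hk : k ≤ 2 * n := Nat.lt_succ_iff.mp (mem_range.mp hk)
  set a := min k (2 * n - k)
  set b := max k (2 * n - k)
  have hab : a + b = 2 * n := by omega
  have hd : ((k : ℤ) - n).natAbs = n - a := by omega
  have hdisj : Disjoint (Ico a n) (Ico b (2 * n)) := by
    simp only [disjoint_left, mem_Ico]
    omega
  rw [mul_assoc, mul_comm (qBinomial _ _ _), ← hab,
    qPochhammer_mul_qBinomial (qPochhammer_ne_zero_of_constantCoeff_eq_zero (by simp))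
      (by omega) (by omega : a ≤ n), hab, ← prod_union hdisj,
    show ((-1) ^ (n + k) : R⟦X⟧) = C ((-1) ^ (n + k)) by simp, mul_assoc, coeff_C_mul, hd]
  simp_rw [← pow_mul]
  rw [coeff_X_pow_mul_prod_one_sub_X_pow]
  · simp_rw [eq_comm]
  intro i hi
  have hai : a ≤ i := by simp only [mem_union, mem_Ico] at hi; omega
  have : 2 * (n - a) < (n - a) ^ 2 + 2 := by nlinarith [sq_nonneg ((n - a : ℕ) - 1 : ℤ)]
  omega

theorem tendsto_prod_one_sub_X_pow_mul_prod_one_sub_X_pow [IsDomain R] [TopologicalSpace R] :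
    Tendsto (fun m ↦ (∏ i ∈ range m, (1 - X ^ (2 * i + 1))) *
      ∏ i ∈ range (2 * m), (1 - X ^ (i + 1)) : ℕ → R⟦X⟧) atTop (𝓝 (gaussSeries R)) := by
  rw [WithPiTopology.tendsto_iff_coeff_tendsto]
  refine fun N ↦ tendsto_nhds_of_eventually_eq ?_
  filter_upwards [eventually_ge_atTop N] with m hm
  have hsplit : (∏ i ∈ range m, (1 - X ^ (2 * i + 1))) * ∏ i ∈ range (2 * m), (1 - X ^ (i + 1)) =
      (∏ i ∈ range m, (1 - X ^ (2 * i + 1)) ^ 2) * qPochhammer (X ^ 2 : R⟦X⟧) m := by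
    rw [prod_range_two_mul, ← mul_assoc, ← prod_mul_distrib, qPochhammer]
    congr 1
    · simp_rw [sq]
    · exact prod_congr rfl fun i _ ↦ by rw [← pow_mul]; ring_nf
  rw [hsplit, coeff_prod_one_sub_X_pow_sq_mul_qPochhammer (by omega),
    sum_range_neg_one_pow_mul_ite_natAbs_sq hm]

theorem coeff_genFun_neg_one_pow_distinctOdd (n : ℕ) :
    coeff n (Nat.Partition.genFun fun i c ↦ if Odd i ∧ c = 1 then (-1 : R) ^ i else 0) =
      (-1) ^ n * (distinctOddPartitions n : R) := by
  rw [Nat.Partition.coeff_genFun, distinctOddPartitions, card_filter]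
  push_cast
  rw [mul_sum]
  refine sum_congr rfl fun p _ ↦ ?_
  rw [Finsupp.prod, prod_ite_zero, Multiset.toFinsupp_support]
  simp only [Multiset.toFinsupp_apply, Multiset.mem_toFinset]
  have hiff : (∀ i ∈ p.parts, Odd i ∧ p.parts.count i = 1) ↔
      p.parts.Nodup ∧ ∀ x ∈ p.parts, Odd x := by
    rw [Multiset.nodup_iff_count_eq_one]
    grind
  by_cases h : p.parts.Nodup ∧ ∀ x ∈ p.parts, Odd x
  · rw [if_pos (hiff.mpr h), if_pos h, prod_pow_eq_pow_sum, mul_one]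
    congr 1
    conv_rhs => rw [← p.parts_sum]
    rw [Finset.sum, Multiset.toFinset_val, Multiset.dedup_eq_self.mpr h.1, Multiset.map_id']
  · rw [if_neg (mt hiff.mp h), if_neg h, mul_zero]

theorem hasProd_one_sub_X_pow_two_mul_add_one [TopologicalSpace R] [T2Space R] :
    HasProd (fun i ↦ (1 - X ^ (2 * i + 1) : R⟦X⟧))
      (mk fun n ↦ (-1) ^ n * (distinctOddPartitions n : R)) := by
  set f : ℕ → ℕ → R := fun i c ↦ if Odd i ∧ c = 1 then (-1) ^ i else 0
  have hfactor (i : ℕ) : 1 + ∑' j, f (i + 1) (j + 1) • (X : R⟦X⟧) ^ ((i + 1) * (j + 1)) =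
      if Odd (i + 1) then 1 - X ^ (i + 1) else 1 := by
    rw [tsum_eq_single 0 fun j hj ↦ by simp [f, hj]]
    split_ifs with hi
    · simp [f, hi, hi.neg_one_pow, sub_eq_add_neg]
    · simp [f, hi]
  have hsum : (mk fun n ↦ (-1) ^ n * (distinctOddPartitions n : R)) = Nat.Partition.genFun f := by
    ext n
    rw [coeff_mk, coeff_genFun_neg_one_pow_distinctOdd]
  have h := Nat.Partition.hasProd_genFun f
  simp_rw [hfactor] at h
  rw [← (mul_right_injective₀ (two_ne_zero' ℕ)).hasProd_iff] at h
  · have e : (fun i ↦ (1 - X ^ (2 * i + 1) : R⟦X⟧)) =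
        (fun i ↦ if Odd (i + 1) then 1 - X ^ (i + 1) else 1) ∘ (2 * ·) := funext fun k ↦ by simp
    rw [hsum, e]
    exact h
  · rintro i hi
    rw [if_neg]
    rintro ⟨m, hm⟩
    exact hi ⟨m, by simp only; omega⟩

end PowerSeries

theorem pentagonal_eq_iff {j : ℤ} {n : ℕ} : pentagonal j = n ↔ 2 * (n : ℤ) = j * (3 * j - 1) := by
  rw [← two_mul_natCast_pentagonal, mul_right_inj' two_ne_zero, Nat.cast_inj, eq_comm]

theorem pentagonal_neg_eq_or_pentagonal_eq_iff {k n : ℕ} :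
    (2 * (n : ℤ) = 3 * (k : ℤ) ^ 2 + k ∨ 2 * (n : ℤ) = 3 * (k : ℤ) ^ 2 - k) ↔
      (pentagonal (-k) = n ∨ pentagonal k = n) := by
  rw [pentagonal_eq_iff, pentagonal_eq_iff]
  constructor <;> rintro (h | h) <;> [left; right; left; right] <;> linear_combination h

theorem pentaCoeff_natCast (n : ℕ) : pentaCoeff n = coeff n (pentagonalSeries ℤ) := by
  by_cases hn : n ∈ Set.range pentagonal
  swap
  · have hn0 : (n : ℤ) ≠ 0 := by
      rintro h
      exact hn ⟨0, by simp_all [pentagonal]⟩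
    rw [coeff_pentagonalSeries_eq_zero _ hn, pentaCoeff, if_neg hn0, dif_neg]
    rintro ⟨k, -, hk⟩
    rcases pentagonal_neg_eq_or_pentagonal_eq_iff.mp hk with h | h
    exacts [hn ⟨_, h⟩, hn ⟨_, h⟩]
  obtain ⟨j, rfl⟩ := hn
  rw [coeff_pentagonalSeries_pentagonal]
  rcases eq_or_ne j 0 with rfl | hj
  · simp [pentaCoeff, pentagonal]
  have hex : ∃ k : ℕ, 0 < k ∧ (2 * ((pentagonal j : ℕ) : ℤ) = 3 * (k : ℤ) ^ 2 + k ∨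
      2 * ((pentagonal j : ℕ) : ℤ) = 3 * (k : ℤ) ^ 2 - k) := by
    refine ⟨j.natAbs, by omega, pentagonal_neg_eq_or_pentagonal_eq_iff.mpr ?_⟩
    rcases Int.natAbs_eq j with h | h
    · right; rw [← h]
    · left; rw [← h]
  have hne : ((pentagonal j : ℕ) : ℤ) ≠ 0 := by
    rw [Nat.cast_ne_zero, ← show pentagonal 0 = 0 from rfl, Ne, pentagonal_inj]
    exact hj
  rw [pentaCoeff, if_neg hne, dif_pos hex]
  obtain ⟨-, hk⟩ := hex.choose_spec
  generalize hex.choose = k at hk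
  rcases pentagonal_neg_eq_or_pentagonal_eq_iff.mp hk with h | h <;>
  · rw [pentagonal_inj] at h
    subst h
    simp [Int.coe_negOnePow_natCast]

theorem mk_distinctOddPartitions_mul_pentagonalSeries {R : Type*} [CommRing R] [IsDomain R] :
    (mk fun n ↦ (-1) ^ n * (distinctOddPartitions n : R)) * pentagonalSeries R = gaussSeries R := by
  -- Both sides are limits of the same partial products for the coefficientwise topology.
  let : TopologicalSpace R := ⊥
  have : DiscreteTopology R := ⟨rfl⟩
  have hodd := hasProd_one_sub_X_pow_two_mul_add_one (R := R)
  have heuler := (WithPiTopology.hasProd_one_sub_X_pow R).tendsto_prod_nat.comp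
    (tendsto_id.const_mul_atTop' two_pos)
  exact tendsto_nhds_unique (hodd.tendsto_prod_nat.mul heuler)
    tendsto_prod_one_sub_X_pow_mul_prod_one_sub_X_pow

theorem euler_type_distinctOddPartitions (n : ℕ) :
    ∑ k ∈ Finset.range (n + 1),
        (-1 : ℤ) ^ k * (distinctOddPartitions k : ℤ) * pentaCoeff ((n : ℤ) - k) =
      if n = 0 then 1
      else if IsSquare n ∧ Even n then 2
      else if IsSquare n ∧ Odd n then -2
      else 0 := by
  calc _ = ∑ k ∈ range (n + 1), coeff k (mk fun n ↦ (-1) ^ n * (distinctOddPartitions n : ℤ)) *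
        coeff (n - k) (pentagonalSeries ℤ) := sum_congr rfl fun k hk ↦ by
          rw [coeff_mk, ← pentaCoeff_natCast, Nat.cast_sub (by simpa [Nat.lt_succ_iff] using hk)]
    _ = coeff n (gaussSeries ℤ) := by
      rw [← mk_distinctOddPartitions_mul_pentagonalSeries, coeff_mul,
        Nat.sum_antidiagonal_eq_sum_range_succ_mk]
    _ = _ := coeff_mk _ _
end

section
/- For every nonnegative integer n, q(n) + 2·∑_{k=1}^{n} (−1)^k · δ_s(k) · q(n−k) = ω(n), where q(m) is the number of partitions of m into pairwise distinct parts and δ_s(k) = 1 if k is a perfect square and 0 otherwise. -/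
/-!
Write `θ = ∑_{k ∈ ℤ} (-1)^k X^(k^2)`, `D = ∏_{i ≥ 1} (1 + X^i) = ∑ q(m) X^m` and
`E = ∏_{i ≥ 1} (1 - X^i)`, which is `∑ ω(m) X^m` by Euler's pentagonal number theorem; the claim
is the coefficient identity `θ D = E`.

Let `O` and `V` be the products of the factors `1 - X^i` with `i` odd and even, so that `E = O V`
and `D E = V`. Then `θ D = E` follows from Gauss's identity `θ = O^2 V` (the Jacobi triple product
at `z = -1`), since `O^2 V D = O E D = O V`. For Gauss's identity, the `q`-binomial theorem expands
`∏_{j<n} (1 - X^(2j+1))^2` as `∑_{|k| ≤ n} (-1)^k [2n, n+k]_{X^2} X^(k^2)`, and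
`[2n, n+k]_{X^2} ∏_{j ≤ 2n} (1 - X^(2j))` is `1` up to terms of order `X^(2(n+1-|k|))`; letting
`n → ∞` gives `θ = O^2 V`.
-/

open scoped Classical

/-- `distinctPartitions m` is the number of partitions of `m` into pairwise distinct
parts (with value `1` at `m = 0`). -/
noncomputable def distinctPartitions (m : ℕ) : ℕ :=
  ((Finset.univ : Finset (Nat.Partition m)).filter fun p => p.parts.Nodup).card

open PowerSeries PowerSeries.WithPiTopology Finset Filter

section Divisibility

variable {R : Type*} [CommRing R]

theorem dvd_mul_sub_one {a x y : R} (hx : a ∣ x - 1) (hy : a ∣ y - 1) : a ∣ x * y - 1 := by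
  rw [show x * y - 1 = x * (y - 1) + (x - 1) by ring]
  exact dvd_add (dvd_mul_of_dvd_right hy x) hx

theorem dvd_prod_sub_one {ι : Type*} {s : Finset ι} {f : ι → R} {a : R}
    (h : ∀ i ∈ s, a ∣ f i - 1) : a ∣ ∏ i ∈ s, f i - 1 :=
  prod_induction f (fun x ↦ a ∣ x - 1) (fun _ _ ↦ dvd_mul_sub_one) (by simp) h

theorem pow_dvd_one_sub_pow_sub_one (q : R) {k e : ℕ} (h : k ≤ e) : q ^ k ∣ (1 - q ^ e) - 1 := by
  simpa using (pow_dvd_pow q h).neg_right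

end Divisibility

section GaussianBinomial

variable {R : Type*} [CommRing R]

def gaussBinom (q : R) : ℕ → ℕ → R
  | _, 0 => 1
  | 0, _ + 1 => 0
  | m + 1, r + 1 => gaussBinom q m (r + 1) + q ^ (m - r) * gaussBinom q m r

variable (q : R)

theorem gaussBinom_eq_zero_of_lt : ∀ {m r : ℕ}, m < r → gaussBinom q m r = 0
  | 0, _ + 1, _ => rfl
  | m + 1, r + 1, h => by
    rw [gaussBinom, gaussBinom_eq_zero_of_lt (by omega), gaussBinom_eq_zero_of_lt (by omega)]
    ring

/-- The `q`-binomial theorem, in homogeneous form. -/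
theorem prod_add_mul_pow_eq_sum_gaussBinom (a b : R) (m : ℕ) :
    ∏ k ∈ range m, (a + b * q ^ k) =
      ∑ r ∈ range (m + 1), gaussBinom q m r * q ^ r.choose 2 * a ^ (m - r) * b ^ r := by
  induction m with
  | zero => simp [gaussBinom]
  | succ m ih =>
    calc ∏ k ∈ range (m + 1), (a + b * q ^ k)
        = (∑ r ∈ range (m + 1), gaussBinom q m r * q ^ r.choose 2 * a ^ (m - r) * b ^ r) *
            (a + b * q ^ m) := by rw [prod_range_succ, ih]
      _ = ∑ r ∈ range (m + 2), gaussBinom q m r * q ^ r.choose 2 * a ^ (m + 1 - r) * b ^ r +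
            ∑ r ∈ range (m + 1), q ^ (m - r) * gaussBinom q m r * q ^ (r + 1).choose 2 *
              a ^ (m - r) * b ^ (r + 1) := by
        rw [sum_range_succ _ (m + 1), gaussBinom_eq_zero_of_lt q (Nat.lt_succ_self m), mul_add,
          sum_mul, sum_mul, zero_mul, zero_mul, zero_mul, add_zero]
        congr 1 <;> refine sum_congr rfl fun r hr ↦ ?_
        · rw [show m + 1 - r = m - r + 1 by grind, pow_succ]
          ring
        · have hexp : q ^ (m - r) * q ^ (r + 1).choose 2 = q ^ r.choose 2 * q ^ m := by
            rw [← pow_add, ← pow_add, Nat.choose_succ_succ', Nat.choose_one_right]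
            congr 1
            grind
          linear_combination (-(gaussBinom q m r * a ^ (m - r) * b ^ (r + 1))) * hexp
      _ = _ := by
        rw [sum_range_succ' _ (m + 1), sum_range_succ' _ (m + 1)]
        simp only [gaussBinom, add_mul, sum_add_distrib, Nat.add_sub_add_right]
        ring

theorem gaussBinom_mul_prod_one_sub_pow (m r : ℕ) :
    gaussBinom q m r * ∏ j ∈ range r, (1 - q ^ (j + 1)) = ∏ j ∈ range r, (1 - q ^ (m - j)) := by
  induction m generalizing r with
  | zero => cases r <;> simp [gaussBinom]
  | succ m ih =>
    cases r with
    | zero => simp [gaussBinom]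
    | succ r =>
      have hvanish :
          (∏ j ∈ range r, (1 - q ^ (m - j))) * (q ^ (m + 1) - q ^ (m - r + (r + 1))) = 0 := by
        rcases le_or_gt r m with h | h
        · rw [show m - r + (r + 1) = m + 1 by omega, sub_self, mul_zero]
        · rw [prod_eq_zero (mem_range.mpr h) (by simp), zero_mul]
      have h1 := ih (r + 1)
      rw [prod_range_succ, prod_range_succ] at h1
      rw [gaussBinom, prod_range_succ, prod_range_succ']
      simp only [Nat.add_sub_add_right, Nat.sub_zero]
      linear_combination h1 + q ^ (m - r) * (1 - q ^ (r + 1)) * ih r + hvanish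

theorem pow_dvd_gaussBinom_mul_prod_sub_one {m r : ℕ} (h : r ≤ m) :
    q ^ (min r (m - r) + 1) ∣ gaussBinom q m r * ∏ j ∈ range m, (1 - q ^ (j + 1)) - 1 := by
  rw [← prod_range_mul_prod_Ico _ h, ← mul_assoc, gaussBinom_mul_prod_one_sub_pow]
  refine dvd_mul_sub_one (dvd_prod_sub_one fun j hj ↦ ?_) (dvd_prod_sub_one fun j hj ↦ ?_) <;>
    apply pow_dvd_one_sub_pow_sub_one
  · have := mem_range.mp hj; omega
  · have := (mem_Ico.mp hj).1; omega

end GaussianBinomial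

theorem sum_range_two_mul_add_one {M : Type*} [AddCommMonoid M] (f : ℕ → M) (n : ℕ) :
    ∑ r ∈ range (2 * n + 1), f r = f n + ∑ s ∈ range n, (f (n + s + 1) + f (n - 1 - s)) := by
  rw [show 2 * n + 1 = n + 1 + n by omega, sum_range_add, sum_range_succ, sum_add_distrib,
    sum_range_reflect f n]
  simp only [Nat.add_right_comm n 1]
  abel

theorem two_mul_choose_two_add_self (r : ℕ) : 2 * r.choose 2 + r = r ^ 2 := by
  induction r with
  | zero => rfl
  | succ r ih => rw [Nat.choose_succ_succ', Nat.choose_one_right]; linear_combination ih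

theorem two_mul_choose_two_add_mul_sub {n r k : ℕ} (h : r + k = n ∨ r = n + k)
    (hr : r ≤ 2 * n) :
    2 * r.choose 2 + (2 * n - 1) * (2 * n - r) = n * (n - 1) + n * (2 * n - 1) + k ^ 2 := by
  have hc := two_mul_choose_two_add_self r
  rcases Nat.eq_zero_or_pos n with rfl | hn
  · obtain rfl : r = 0 := by omega
    obtain rfl : k = 0 := by omega
    rfl
  zify [hr, hn, (by omega : 1 ≤ 2 * n)] at hc ⊢
  rcases h with rfl | rfl <;> push_cast at hc ⊢ <;> linear_combination hc

section Theta

variable (R : Type*) [CommRing R]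

/-- The theta series `∑_{k ∈ ℤ} (-1)^k X^(k^2)`: a nonzero square `k^2` is reached by `±k`, and
`(-1)^(k^2) = (-1)^k`. -/
noncomputable def thetaSeries : R⟦X⟧ :=
  PowerSeries.mk fun m ↦ if m = 0 then 1 else if IsSquare m then 2 * (-1) ^ m else 0

noncomputable def thetaSum (n : ℕ) : R⟦X⟧ :=
  1 + 2 * ∑ s ∈ range n, (-1) ^ (s + 1) * X ^ ((s + 1) ^ 2)

theorem X_pow_dvd_thetaSeries_sub_thetaSum (n : ℕ) :
    X ^ (n + 1) ∣ thetaSeries R - thetaSum R n := by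
  have h2 : (2 : R⟦X⟧) = C 2 := (map_ofNat C 2).symm
  have hsign : ∀ k, (-1 : R⟦X⟧) ^ k = C ((-1) ^ k) := by simp
  refine X_pow_dvd_iff.mpr fun m hm ↦ ?_
  rw [map_sub, sub_eq_zero]
  simp only [thetaSeries, thetaSum, coeff_mk, h2, hsign, map_add, coeff_one, coeff_C_mul,
    map_sum, coeff_X_pow, mul_ite, mul_one, mul_zero]
  rcases eq_or_ne m 0 with rfl | hm0
  · rw [sum_eq_zero fun s _ ↦ if_neg (pow_pos s.succ_pos 2).ne]
    simp
  rw [if_neg hm0, if_neg hm0, zero_add]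
  by_cases hsq : IsSquare m
  · obtain ⟨t, rfl⟩ := hsq
    have ht : 1 ≤ t := Nat.pos_of_ne_zero (by rintro rfl; exact hm0 rfl)
    have htn : t - 1 < n := by have := Nat.le_mul_self t; omega
    rw [if_pos ⟨t, rfl⟩, sum_eq_single_of_mem (t - 1) (mem_range.mpr htn), if_pos (by
      rw [Nat.sub_add_cancel ht, sq]), Nat.sub_add_cancel ht]
    · exact congrArg (2 * ·) (neg_one_pow_congr (by rw [Nat.even_mul, or_self]))
    intro s _ hs
    rw [if_neg]
    intro h
    rw [sq, Nat.mul_self_inj] at h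
    omega
  · rw [if_neg hsq, sum_eq_zero, mul_zero]
    intro s _
    rw [if_neg]
    rintro rfl
    exact hsq ⟨s + 1, sq (s + 1)⟩

end Theta

section Gauss

variable {R : Type*} [CommRing R]

theorem prod_range_two_mul_pow_sub_pow (q : R) (n : ℕ) :
    ∏ k ∈ range (2 * n), (q ^ (2 * n - 1) - q ^ (2 * k)) =
      (-1) ^ n * q ^ (n * (n - 1) + n * (2 * n - 1)) *
        (∏ j ∈ range n, (1 - q ^ (2 * j + 1))) ^ 2 := by
  have hlow : ∀ k ∈ range n,
      q ^ (2 * n - 1) - q ^ (2 * k) = -1 * q ^ (2 * k) * (1 - q ^ (2 * (n - 1 - k) + 1)) := by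
    intro k hk
    have := mem_range.mp hk
    rw [mul_assoc, mul_sub, mul_one, ← pow_add,
      show 2 * k + (2 * (n - 1 - k) + 1) = 2 * n - 1 by omega]
    ring
  have hhigh : ∀ k ∈ range n,
      q ^ (2 * n - 1) - q ^ (2 * (n + k)) = q ^ (2 * n - 1) * (1 - q ^ (2 * k + 1)) := by
    intro k hk
    have := mem_range.mp hk
    rw [mul_sub, mul_one, ← pow_add, show 2 * n - 1 + (2 * k + 1) = 2 * (n + k) by omega]
  rw [two_mul n, prod_range_add, ← two_mul n, prod_congr rfl hlow, prod_congr rfl hhigh,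
    prod_mul_distrib, prod_mul_distrib, prod_mul_distrib,
    prod_range_reflect (fun j ↦ 1 - q ^ (2 * j + 1)), prod_const, prod_const, card_range,
    prod_pow_eq_pow_sum, ← mul_sum, mul_comm 2, sum_range_id_mul_two, ← pow_mul]
  ring

theorem neg_one_pow_eq_of_add_eq_or_eq_add {n r k : ℕ} (h : r + k = n ∨ r = n + k) :
    (-1 : R) ^ r = (-1) ^ n * (-1) ^ k := by
  rcases h with rfl | rfl
  · rw [pow_add, mul_assoc, ← pow_add, ← two_mul, pow_mul, neg_one_sq, one_pow, mul_one]
  · rw [pow_add]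

theorem prod_one_sub_X_pow_odd_sq_eq (n : ℕ) :
    (∏ j ∈ range n, (1 - X ^ (2 * j + 1) : R⟦X⟧)) ^ 2 =
      gaussBinom (X ^ 2) (2 * n) n + ∑ s ∈ range n, (-1) ^ (s + 1) *
        (gaussBinom (X ^ 2) (2 * n) (n + s + 1) + gaussBinom (X ^ 2) (2 * n) (n - 1 - s)) *
          X ^ ((s + 1) ^ 2) := by
  have hterm : ∀ r k, (r + k = n ∨ r = n + k) → r ≤ 2 * n →
      gaussBinom (X ^ 2 : R⟦X⟧) (2 * n) r * X ^ (2 * r.choose 2) *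
          X ^ ((2 * n - 1) * (2 * n - r)) * (-1) ^ r =
        (-1) ^ n * X ^ (n * (n - 1) + n * (2 * n - 1)) *
          ((-1) ^ k * gaussBinom (X ^ 2) (2 * n) r * X ^ (k ^ 2)) := by
    intro r k h hr
    rw [mul_assoc (gaussBinom _ _ _), ← pow_add, two_mul_choose_two_add_mul_sub h hr, pow_add,
      neg_one_pow_eq_of_add_eq_or_eq_add h]
    ring
  -- Homogenising with `a = X^(2n-1)` keeps every exponent nonnegative; the common factor
  -- `(-1)^n X^(n(n-1) + n(2n-1))` is cancelled at the end.
  have hq := prod_add_mul_pow_eq_sum_gaussBinom (X ^ 2 : R⟦X⟧) (X ^ (2 * n - 1)) (-1) (2 * n)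
  simp only [neg_one_mul, ← sub_eq_add_neg, ← pow_mul] at hq
  rw [prod_range_two_mul_pow_sub_pow, sum_range_two_mul_add_one, hterm n 0 (by omega) (by omega),
    sum_congr rfl fun s hs ↦ by
      have := mem_range.mp hs
      rw [hterm (n + s + 1) (s + 1) (by omega) (by omega),
        hterm (n - 1 - s) (s + 1) (by omega) (by omega)]] at hq
  refine (X_pow_mul_inj (k := n * (n - 1) + n * (2 * n - 1))).mp
    ((isUnit_neg_one.pow n).mul_left_cancel ?_)
  rw [← mul_assoc, ← mul_assoc, hq, mul_add, mul_sum]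
  congr 1
  · ring
  · exact sum_congr rfl fun s _ ↦ by ring

theorem X_pow_dvd_prod_sq_mul_prod_sub_thetaSum (n : ℕ) :
    X ^ (2 * n + 1) ∣ (∏ j ∈ range n, (1 - X ^ (2 * j + 1) : R⟦X⟧)) ^ 2 *
      ∏ j ∈ range (2 * n), (1 - X ^ (2 * (j + 1))) - thetaSum R n := by
  set G : ℕ → R⟦X⟧ := fun r ↦
    gaussBinom (X ^ 2) (2 * n) r * ∏ j ∈ range (2 * n), (1 - X ^ (2 * (j + 1)))
  have hG : ∀ r ≤ 2 * n, X ^ (2 * (min r (2 * n - r) + 1)) ∣ G r - 1 := by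
    intro r hr
    simpa only [G, pow_mul] using pow_dvd_gaussBinom_mul_prod_sub_one (X ^ 2 : R⟦X⟧) hr
  have hsplit : (∏ j ∈ range n, (1 - X ^ (2 * j + 1) : R⟦X⟧)) ^ 2 *
        ∏ j ∈ range (2 * n), (1 - X ^ (2 * (j + 1))) - thetaSum R n =
      (G n - 1) + ∑ s ∈ range n,
        (-1) ^ (s + 1) * (X ^ ((s + 1) ^ 2) * ((G (n + s + 1) - 1) + (G (n - 1 - s) - 1))) := by
    rw [prod_one_sub_X_pow_odd_sq_eq, thetaSum, add_mul, sum_mul, mul_sum, add_sub_add_comm,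
      ← sum_sub_distrib]
    exact congrArg₂ _ rfl (sum_congr rfl fun s _ ↦ by ring)
  rw [hsplit]
  refine dvd_add ((pow_dvd_pow X (by omega)).trans (hG n (by omega)))
    (dvd_sum fun s hs ↦ Dvd.dvd.mul_left ?_ _)
  have := mem_range.mp hs
  have hsq : 2 * s + 1 ≤ (s + 1) ^ 2 := by nlinarith
  have hplus := hG (n + s + 1) (by omega)
  have hminus := hG (n - 1 - s) (by omega)
  rw [show 2 * (min (n + s + 1) (2 * n - (n + s + 1)) + 1) = 2 * (n - s) by omega] at hplus
  rw [show 2 * (min (n - 1 - s) (2 * n - (n - 1 - s)) + 1) = 2 * (n - s) by omega] at hminus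
  have hprod := mul_dvd_mul_left (X ^ ((s + 1) ^ 2) : R⟦X⟧) (dvd_add hplus hminus)
  rw [← pow_add] at hprod
  exact (pow_dvd_pow X (by omega)).trans hprod

end Gauss

section Topology

open scoped PowerSeries.WithPiTopology Topology

variable {R : Type*} [CommRing R] [TopologicalSpace R]

theorem tendsto_of_X_pow_dvd_sub {f : ℕ → R⟦X⟧} {g : R⟦X⟧} {N : ℕ → ℕ}
    (hN : Tendsto N atTop atTop) (h : ∀ n, X ^ N n ∣ f n - g) : Tendsto f atTop (𝓝 g) := by
  refine (tendsto_iff_coeff_tendsto _ _ _ _).mpr fun d ↦ tendsto_nhds_of_eventually_eq ?_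
  filter_upwards [hN.eventually_gt_atTop d] with n hn
  rw [← sub_eq_zero, ← map_sub]
  exact X_pow_dvd_iff.mp (h n) d hn

theorem multipliable_one_sub_X_pow_of_tendsto {e : ℕ → ℕ} (he : Tendsto e atTop atTop) :
    Multipliable fun i ↦ (1 : R⟦X⟧) - X ^ e i := by
  nontriviality R
  simp_rw [sub_eq_add_neg]
  apply multipliable_one_add_of_tendsto_order_atTop_nhds_top
  simp_rw [order_neg, order_X_pow]
  exact ENat.tendsto_nhds_top_iff_natCast_lt.mpr fun n ↦
    (he.eventually_gt_atTop n).mono fun i hi ↦ Nat.cast_lt.mpr hi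

theorem tendsto_prod_sq_mul_prod_thetaSeries :
    Tendsto (fun n ↦ (∏ j ∈ range n, (1 - X ^ (2 * j + 1) : R⟦X⟧)) ^ 2 *
      ∏ j ∈ range (2 * n), (1 - X ^ (2 * (j + 1)))) atTop (𝓝 (thetaSeries R)) :=
  tendsto_of_X_pow_dvd_sub (tendsto_add_atTop_nat 1) fun n ↦ by
    simpa using dvd_sub
      ((pow_dvd_pow X (by omega)).trans (X_pow_dvd_prod_sq_mul_prod_sub_thetaSum n))
      (X_pow_dvd_thetaSeries_sub_thetaSum R n)

end Topology

open Nat.Partition in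
theorem thetaSeries_mul_powerSeriesMk_card_distincts (R : Type*) [CommRing R] :
    thetaSeries R * PowerSeries.mk (fun n ↦ (#(distincts n) : R)) = pentagonalSeries R := by
  -- The identity is algebraic; the discrete topology on `R` lets us use infinite products.
  let _ : TopologicalSpace R := ⊥
  have : DiscreteTopology R := ⟨rfl⟩
  set D : R⟦X⟧ := PowerSeries.mk fun n ↦ (#(distincts n) : R)
  have htwo_mul : Tendsto (2 * · : ℕ → ℕ) atTop atTop :=
    StrictMono.tendsto_atTop fun _ _ h ↦ by omega
  obtain ⟨odd, hodd⟩ := multipliable_one_sub_X_pow_of_tendsto (R := R)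
    (e := fun i ↦ 2 * i + 1) (StrictMono.tendsto_atTop fun _ _ h ↦ by omega)
  obtain ⟨even, heven⟩ := multipliable_one_sub_X_pow_of_tendsto (R := R)
    (e := fun i ↦ 2 * (i + 1)) (StrictMono.tendsto_atTop fun _ _ h ↦ by omega)
  have hE := hasProd_one_sub_X_pow R
  have hD : HasProd (fun i ↦ (1 : R⟦X⟧) + X ^ (i + 1)) D := by
    simpa [Finset.sum_range, Fin.sum_univ_two, countRestricted_two, add_comm] using
      hasProd_powerSeriesMk_card_countRestricted R two_pos
  have hE_eq : pentagonalSeries R = odd * even :=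
    hE.unique (HasProd.even_mul_odd (f := fun i ↦ 1 - X ^ (i + 1)) hodd heven)
  have hDE : D * pentagonalSeries R = even :=
    (hD.mul hE).unique (by convert heven using 2 with i; ring)
  have hgauss : thetaSeries R = odd ^ 2 * even :=
    tendsto_nhds_unique tendsto_prod_sq_mul_prod_thetaSeries
      ((hodd.tendsto_prod_nat.pow 2).mul (heven.tendsto_prod_nat.comp htwo_mul))
  linear_combination D * hgauss - odd * D * hE_eq + odd * hDE - hE_eq

theorem coeff_pentagonalSeries_of_two_mul_eq {n k : ℕ}
    (h : 2 * (n : ℤ) = 3 * k ^ 2 + k ∨ 2 * (n : ℤ) = 3 * k ^ 2 - k) :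
    (pentagonalSeries ℤ).coeff n = (-1) ^ k := by
  obtain ⟨j, hj, hjk⟩ : ∃ j : ℤ, pentagonal j = n ∧ j.negOnePow = (k : ℤ).negOnePow := by
    rcases h with h | h
    · refine ⟨-k, ?_, Int.negOnePow_neg _⟩
      have : 2 * (pentagonal (-k) : ℤ) = 2 * n := by rw [two_mul_natCast_pentagonal_neg, h]; ring
      omega
    · refine ⟨k, ?_, rfl⟩
      have : 2 * (pentagonal k : ℤ) = 2 * n := by rw [two_mul_natCast_pentagonal, h]; ring
      omega
  rw [← hj, coeff_pentagonalSeries_pentagonal, hjk, Int.coe_negOnePow_natCast]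
  push_cast
  rfl

theorem pentaCoeff_eq_coeff_pentagonalSeries (n : ℕ) :
    pentaCoeff n = (pentagonalSeries ℤ).coeff n := by
  unfold pentaCoeff
  split_ifs with h0 h
  · obtain rfl : n = 0 := by omega
    exact (coeff_pentagonalSeries_of_two_mul_eq (k := 0) (by simp)).symm
  · exact (coeff_pentagonalSeries_of_two_mul_eq h.choose_spec.2).symm
  · refine (coeff_pentagonalSeries_eq_zero _ fun ⟨j, hj⟩ ↦ h ?_).symm
    have hk : ∀ k : ℕ, pentagonal k = n ∨ pentagonal (-k) = n → 0 < k := fun k hk ↦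
      Nat.pos_of_ne_zero fun hk0 ↦ h0 (by subst hk0; simpa [pentagonal, eq_comm] using hk)
    obtain ⟨k, rfl | rfl⟩ := Int.eq_nat_or_neg j
    · refine ⟨k, hk k (.inl hj), .inr ?_⟩
      rw [← hj, two_mul_natCast_pentagonal]; ring
    · refine ⟨k, hk k (.inr hj), .inl ?_⟩
      rw [← hj, two_mul_natCast_pentagonal_neg]; ring

theorem euler_type_distinctPartitions (n : ℕ) :
    (distinctPartitions n : ℤ) +
        2 * ∑ k ∈ Finset.Icc 1 n,
          (-1 : ℤ) ^ k * (if IsSquare k then (1 : ℤ) else 0) * (distinctPartitions (n - k) : ℤ) =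
      pentaCoeff (n : ℤ) := by
  have hcard : ∀ m, distinctPartitions m = #(Nat.Partition.distincts m) := fun m ↦ rfl
  rw [pentaCoeff_eq_coeff_pentagonalSeries, ← thetaSeries_mul_powerSeriesMk_card_distincts,
    coeff_mul,
    Nat.sum_antidiagonal_eq_sum_range_succ (fun i j ↦ coeff i (thetaSeries ℤ) * coeff j _),
    sum_range_succ', ← Ico_add_one_right_eq_Icc, sum_Ico_eq_sum_range, mul_sum,
    Nat.add_sub_cancel, add_comm]
  congr 1
  · refine sum_congr rfl fun k _ ↦ ?_
    simp only [thetaSeries, coeff_mk, add_comm 1 k, hcard, Nat.add_one_ne_zero, if_false]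
    split_ifs <;> ring
  · simp [thetaSeries, hcard]
end

section
/- Let k ≥ 2 and n be positive integers with gcd(k, n) = 1. Then k divides r_k(n), where r_k(n) is the number of representations of n as an ordered sum of k squares of integers, i.e., the number of k-tuples (x_1, …, x_k) of integers with x_1² + ⋯ + x_k² = n. -/
/-!
Index the coordinates by `ZMod k`, so that translating the index permutes the representations
of `n`. If translation by `g` fixes a representation, the representation is constant on the
cosets of `⟨g⟩`, each of which has `addOrderOf g` elements, so `addOrderOf g` divides `n` as well
as `k`; since `gcd(k, n) = 1`, `g = 0`. The action is therefore free and every orbit has exactly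
`k` elements.
-/

/-- `rSquares k n` is the number of `k`-tuples `(x₁, …, x_k)` of integers with
`x₁² + ⋯ + x_k² = n`. -/
noncomputable def rSquares (k n : ℕ) : ℕ :=
  Set.ncard {v : Fin k → ℤ | ∑ i, v i ^ 2 = (n : ℤ)}

open AddAction

theorem natCard_dvd_sum_of_stabilizer_eq_bot {G X : Type*} [AddGroup G] [Fintype G]
    [AddAction G X] [Fintype X] (hfree : ∀ x : X, stabilizer G x = ⊥) {F : X → ℤ}
    (hF : ∀ (g : G) (x : X), F (g +ᵥ x) = F x) : (Nat.card G : ℤ) ∣ ∑ x, F x := by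
  classical
  let F' : Quotient (orbitRel G X) → ℤ := Quotient.lift F fun _ y ⟨g, hg⟩ => hg ▸ hF g y
  have : Fintype (Quotient (orbitRel G X)) := Fintype.ofFinite _
  have hsum : ∑ x, F x = Nat.card G * ∑ o, F' o := calc
    ∑ x, F x = ∑ x, F' (selfEquivOrbitsQuotientProd hfree x).1 := rfl
    _ = ∑ p : Quotient (orbitRel G X) × G, F' p.1 :=
      Equiv.sum_comp _ fun p : Quotient (orbitRel G X) × G => F' p.1
    _ = Nat.card G * ∑ o, F' o := by
      simp [Fintype.sum_prod_type, Finset.mul_sum, Nat.card_eq_fintype_card]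
  exact Dvd.intro _ hsum.symm

theorem Function.Periodic.addOrderOf_dvd_sum {G : Type*} [AddCommGroup G] [Fintype G]
    {F : G → ℤ} {g : G} (hF : Function.Periodic F g) : (addOrderOf g : ℤ) ∣ ∑ x, F x := by
  rw [← Nat.card_zmultiples]
  refine natCard_dvd_sum_of_stabilizer_eq_bot IsCancelVAdd.stabilizer_eq_bot fun h x => ?_
  obtain ⟨m, hm⟩ := AddSubgroup.mem_zmultiples_iff.mp h.2
  show F (h + x) = F x
  rw [add_comm, ← hm, hF.zsmul m x]

def sumFiber (ι : Type*) [Fintype ι] {α : Type*} (f : α → ℤ) (n : ℤ) : Set (ι → α) :=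
  {w | ∑ i, f (w i) = n}

namespace sumFiber

theorem natCard_congr {ι κ α : Type*} [Fintype ι] [Fintype κ] (e : ι ≃ κ) (f : α → ℤ)
    (n : ℤ) : Nat.card (sumFiber ι f n) = Nat.card (sumFiber κ f n) :=
  Nat.card_congr <| (e.arrowCongr (Equiv.refl α)).subtypeEquiv fun w => by
    show _ ↔ ∑ j, f (w (e.symm j)) = n
    rw [e.symm.sum_comp fun i => f (w i)]
    rfl

variable {G α : Type*} [AddCommGroup G] [Fintype G] {f : α → ℤ} {n : ℤ}

instance : AddAction G (sumFiber G f n) where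
  vadd g w := ⟨fun i => w.1 (i + g),
    (Equiv.sum_comp (Equiv.addRight g) fun i => f (w.1 i)).trans w.2⟩
  zero_vadd w := Subtype.ext <| funext fun i => congrArg w.1 (add_zero i)
  add_vadd a b w := Subtype.ext <| funext fun i => congrArg w.1 (add_assoc i a b).symm

theorem periodic_of_vadd_eq_self {g : G} {w : sumFiber G f n} (hg : g +ᵥ w = w) :
    Function.Periodic (fun i => f (w.1 i)) g := fun i =>
  congrArg f (congrFun (congrArg Subtype.val hg) i)

theorem stabilizer_eq_bot (h : IsCoprime (Nat.card G : ℤ) n) (w : sumFiber G f n) :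
    stabilizer G w = ⊥ := by
  refine (AddSubgroup.eq_bot_iff_forall _).mpr fun g hg => ?_
  have hdvd_n : (addOrderOf g : ℤ) ∣ n := w.2 ▸ (periodic_of_vadd_eq_self hg).addOrderOf_dvd_sum
  have hunit : IsUnit (addOrderOf g : ℤ) :=
    h.isUnit_of_dvd' (Int.natCast_dvd_natCast.mpr (addOrderOf_dvd_natCard g)) hdvd_n
  rw [← AddMonoid.addOrderOf_eq_one_iff]
  exact Nat.isUnit_iff.mp (Int.ofNat_isUnit.mp hunit)

theorem natCard_dvd_natCard (h : IsCoprime (Nat.card G : ℤ) n) :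
    Nat.card G ∣ Nat.card (sumFiber G f n) := by
  rw [Nat.card_congr (selfEquivOrbitsQuotientProd (stabilizer_eq_bot h)), Nat.card_prod]
  exact dvd_mul_left _ _

end sumFiber

theorem sum_of_squares_congruence_general (k n : ℕ) (hk : 2 ≤ k)
    (h : Nat.gcd k n = 1) : k ∣ rSquares k n := by
  have : NeZero k := ⟨by omega⟩
  have hcard : Nat.card (ZMod k) = k := Nat.card_zmod k
  have hcop : IsCoprime (Nat.card (ZMod k) : ℤ) n := by
    rw [hcard]
    exact Nat.isCoprime_iff_coprime.mpr h
  calc k = Nat.card (ZMod k) := hcard.symm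
    _ ∣ Nat.card (sumFiber (ZMod k) (· ^ 2) n) := sumFiber.natCard_dvd_natCard hcop
    _ = rSquares k n := by
      rw [rSquares, ← Nat.card_coe_set_eq, sumFiber.natCard_congr (ZMod.finEquiv k).symm.toEquiv]
      rfl

theorem sum_of_squares_congruence (k n : ℕ) (hk : 2 ≤ k) (hn : 0 < n)
    (h : Nat.gcd k n = 1) : k ∣ rSquares k n :=
  sum_of_squares_congruence_general k n hk h
end
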